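/- Let f : ℝ² → ℝ be integrable with support in the unit disc and let g(x) = f_ψ(x + x') for a fixed rotation angle ψ and translation x' ∈ ℝ². Then the rotationally-averaged third-order autocorrelation is invariant: s_g = s_f, where s_f(x₁,x₂) = (1/2π) ∫₀^{2π} ∫_{ℝ²} f_φ(x) f_φ(x+x₁) f_φ(x+x₂) dx dφ. -/

import Mathlib

/-!
Rotating `g = f_ψ(· + x')` by `φ` gives `f_{φ+ψ}` translated by `R_{-φ} x'`. The triple
correlation `∫ h(x) h(x + x₁) h(x + x₂) dx` is invariant under translating `h`, so the inner
integral of `s_g` at angle `φ` is that of `s_f` at angle `φ + ψ`; being `2π`-periodic in the angle,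
its average over a full period does not see the shift by `ψ`.
-/

open MeasureTheory

/-- Rotation of the plane (identified with `ℂ`) by angle `φ`, applied to the
argument of `f`: `f_φ(x) = f(R_φ x)`. -/
noncomputable def rotFun (f : ℂ → ℝ) (φ : ℝ) (x : ℂ) : ℝ :=
  f (Complex.exp (φ * Complex.I) * x)

/-- The rotationally averaged third-order autocorrelation `s_f`. -/
noncomputable def sAuto (f : ℂ → ℝ) (x₁ x₂ : ℂ) : ℝ :=
  (1 / (2 * Real.pi)) * ∫ φ in (0 : ℝ)..(2 * Real.pi),
    ∫ x : ℂ, rotFun f φ x * rotFun f φ (x + x₁) * rotFun f φ (x + x₂)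

noncomputable def tripleCorrelation {G : Type*} [MeasurableSpace G] [Add G]
    (μ : Measure G) (h : G → ℝ) (x₁ x₂ : G) : ℝ :=
  ∫ x, h x * h (x + x₁) * h (x + x₂) ∂μ

theorem tripleCorrelation_comp_add_right {G : Type*} [AddCommGroup G] [MeasurableSpace G]
    [MeasurableAdd G] (μ : Measure G) [μ.IsAddRightInvariant] (h : G → ℝ) (c x₁ x₂ : G) :
    tripleCorrelation μ (fun x => h (x + c)) x₁ x₂ = tripleCorrelation μ h x₁ x₂ := by
  simp only [tripleCorrelation, add_right_comm _ _ c]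
  exact integral_add_right_eq_self (fun x => h x * h (x + x₁) * h (x + x₂)) c

theorem Function.Periodic.intervalIntegral_comp_add_right {E : Type*} [NormedAddCommGroup E]
    [NormedSpace ℝ E] {F : ℝ → E} {T : ℝ} (hF : Function.Periodic F T) (t ψ : ℝ) :
    ∫ φ in t..t + T, F (φ + ψ) = ∫ φ in t..t + T, F φ := by
  rw [intervalIntegral.integral_comp_add_right, add_right_comm,
    hF.intervalIntegral_add_eq (t + ψ) t]

theorem rotFun_periodic (f : ℂ → ℝ) : Function.Periodic (rotFun f) (2 * Real.pi) := by
  intro φ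
  ext y
  simp only [rotFun, Complex.ofReal_add, add_mul, Complex.exp_add, Complex.ofReal_mul,
    Complex.ofReal_ofNat, Complex.exp_two_pi_mul_I, mul_one]

theorem rotFun_of_eq_comp_mul_add {f g : ℂ → ℝ} {ψ : ℝ} {x' : ℂ}
    (hg : ∀ x : ℂ, g x = f (Complex.exp (ψ * Complex.I) * (x + x'))) (φ : ℝ) :
    rotFun g φ = fun y => rotFun f (φ + ψ) (y + Complex.exp (-φ * Complex.I) * x') := by
  ext y
  simp only [rotFun, hg]
  congr 1
  rw [Complex.ofReal_add, add_mul, Complex.exp_add, neg_mul, Complex.exp_neg]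
  field_simp

theorem sAuto_eq_average (f : ℂ → ℝ) (x₁ x₂ : ℂ) :
    sAuto f x₁ x₂ = (1 / (2 * Real.pi)) *
      ∫ φ in (0 : ℝ)..(2 * Real.pi), tripleCorrelation volume (rotFun f φ) x₁ x₂ :=
  rfl

theorem stmt16_general (f : ℂ → ℝ)
    (ψ : ℝ) (x' : ℂ) (g : ℂ → ℝ)
    (hg : ∀ x : ℂ, g x = f (Complex.exp (ψ * Complex.I) * (x + x')))
    (x₁ x₂ : ℂ) :
    sAuto g x₁ x₂ = sAuto f x₁ x₂ := by
  have hshift : ∀ φ : ℝ, tripleCorrelation volume (rotFun g φ) x₁ x₂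
      = tripleCorrelation volume (rotFun f (φ + ψ)) x₁ x₂ := fun φ => by
    rw [rotFun_of_eq_comp_mul_add hg, tripleCorrelation_comp_add_right]
  have hper : Function.Periodic
      (fun φ => tripleCorrelation volume (rotFun f φ) x₁ x₂) (2 * Real.pi) := fun φ => by
    simp only [rotFun_periodic f φ]
  simp only [sAuto_eq_average, hshift]
  simpa only [zero_add] using congrArg (1 / (2 * Real.pi) * ·)
    (hper.intervalIntegral_comp_add_right 0 ψ)

theorem stmt16 (f : ℂ → ℝ) (hmeas : Measurable f)
    (hbdd : ∃ C : ℝ, ∀ x, |f x| ≤ C)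
    (hsupp : ∀ x : ℂ, 1 ≤ ‖x‖ → f x = 0)
    (ψ : ℝ) (x' : ℂ) (g : ℂ → ℝ)
    (hg : ∀ x : ℂ, g x = f (Complex.exp (ψ * Complex.I) * (x + x')))
    (x₁ x₂ : ℂ) :
    sAuto g x₁ x₂ = sAuto f x₁ x₂ :=
  stmt16_general f ψ x' g hg x₁ x₂
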